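/- Let Y ∈ ℝ^{n×d} with YᵀY = I and rows y_i satisfying Σ_i(‖y_i‖² − d/n)² ≤ d²/n. Let H ∈ ℝ^{n×n} be symmetric with ‖H‖_F = √k, let Δ = (1/(2α))diag(‖y_i‖²) for α > 0, and let a be a unit eigenvector of B = YᵀHY with eigenvalue λ ∈ [0,1]. Then |aᵀ Yᵀ (Δ(λI − H) + (λI − H)Δ) Y a| ≤ (1/√n)·(d/α)·(λ + √k). -/

import Mathlib

/-!
Put `x = Y a`, a unit vector because `YᵀY = 1`, and `m = (λ - H) x`. Since `Δ` is diagonal and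
`λ - H` symmetric, the form equals `(1/α) ∑ ‖y_i‖² x_i m_i`. The eigen-equation gives `xᵀHx = λ`, so
`m ⊥ x` and `‖m‖² = ‖Hx‖² - λ² ≤ ‖H‖_F² = k`. Orthogonality lets us replace `‖y_i‖²` by its
deviation `‖y_i‖² - d/n`, and Cauchy–Schwarz together with `|x_i| ≤ 1` bounds the sum by `(d/√n) √k`.
-/

open Matrix

namespace Matrix

variable {m n R : Type*} [Fintype m] [Fintype n]

theorem dotProduct_transpose_mul_mul_mulVec [CommSemiring R] (Y : Matrix n m R)
    (A : Matrix n n R) (a : m → R) :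
    a ⬝ᵥ ((Yᵀ * A * Y) *ᵥ a) = (Y *ᵥ a) ⬝ᵥ (A *ᵥ (Y *ᵥ a)) := by
  rw [← mulVec_mulVec, ← mulVec_mulVec, dotProduct_mulVec, vecMul_transpose]

theorem IsSymm.dotProduct_mul_add_mul_mulVec [CommSemiring R] {A M : Matrix n n R}
    (hA : A.IsSymm) (hM : M.IsSymm) (x : n → R) :
    x ⬝ᵥ ((A * M + M * A) *ᵥ x) = 2 * (x ⬝ᵥ (A *ᵥ (M *ᵥ x))) := by
  have hMA : x ⬝ᵥ ((M * A) *ᵥ x) = x ⬝ᵥ (A *ᵥ (M *ᵥ x)) := by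
    rw [← mulVec_mulVec, dotProduct_mulVec, dotProduct_mulVec x A, ← mulVec_transpose,
      ← mulVec_transpose, hM.eq, hA.eq, dotProduct_comm]
  rw [add_mulVec, dotProduct_add, hMA, ← mulVec_mulVec, two_mul]

theorem dotProduct_diagonal_mulVec_sub_const [CommRing R] [DecidableEq n] {x y : n → R}
    (hxy : x ⬝ᵥ y = 0) (D : n → R) (c : R) :
    x ⬝ᵥ (diagonal D *ᵥ y) = ∑ i, ((D i - c) * x i) * y i := by
  have : ∑ i, ((D i - c) * x i) * y i = x ⬝ᵥ (diagonal D *ᵥ y) - c * (x ⬝ᵥ y) := by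
    simp only [dotProduct, mulVec_diagonal, Finset.mul_sum, ← Finset.sum_sub_distrib]
    exact Finset.sum_congr rfl fun i _ => by ring
  rw [this, hxy, mul_zero, sub_zero]

theorem dotProduct_smul_sub_eq_zero [CommRing R] {x v : n → R} {c : R}
    (hx : x ⬝ᵥ x = 1) (hxv : x ⬝ᵥ v = c) : x ⬝ᵥ (c • x - v) = 0 := by
  rw [dotProduct_sub, dotProduct_smul, hx, hxv, smul_eq_mul, mul_one, sub_self]

theorem dotProduct_self_smul_sub [CommRing R] {x v : n → R} {c : R}
    (hx : x ⬝ᵥ x = 1) (hxv : x ⬝ᵥ v = c) :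
    (c • x - v) ⬝ᵥ (c • x - v) = v ⬝ᵥ v - c ^ 2 := by
  have hvx : v ⬝ᵥ x = c := dotProduct_comm v x ▸ hxv
  simp only [dotProduct_sub, sub_dotProduct, dotProduct_smul, smul_dotProduct, hx, hxv, hvx,
    smul_eq_mul]
  ring

theorem dotProduct_self_eq_sum_sq [CommSemiring R] (x : n → R) : x ⬝ᵥ x = ∑ i, x i ^ 2 := by
  simp only [dotProduct, sq]

theorem trace_mul_transpose_eq_sum_dotProduct [CommSemiring R] (H : Matrix m n R) :
    (H * Hᵀ).trace = ∑ i, H i ⬝ᵥ H i := rfl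

theorem mulVec_dotProduct_mulVec_le (H : Matrix m n ℝ) (x : n → ℝ) :
    (H *ᵥ x) ⬝ᵥ (H *ᵥ x) ≤ (H * Hᵀ).trace * (x ⬝ᵥ x) := by
  rw [trace_mul_transpose_eq_sum_dotProduct, Finset.sum_mul]
  refine Finset.sum_le_sum fun i _ => ?_
  simpa only [dotProduct_self_eq_sum_sq, mulVec, dotProduct, ← sq] using
    Finset.sum_mul_sq_le_sq_mul_sq Finset.univ (H i) x

theorem dotProduct_self_smul_sub_mulVec_le_trace (H : Matrix n n ℝ) {x : n → ℝ} {c : ℝ}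
    (hx : x ⬝ᵥ x = 1) (hxHx : x ⬝ᵥ (H *ᵥ x) = c) :
    (c • x - H *ᵥ x) ⬝ᵥ (c • x - H *ᵥ x) ≤ (H * Hᵀ).trace := by
  have hHx := mulVec_dotProduct_mulVec_le H x
  rw [hx, mul_one] at hHx
  rw [dotProduct_self_smul_sub hx hxHx]
  linarith [sq_nonneg c]

end Matrix

theorem abs_sum_mul_mul_le_of_sum_sq_le_one {ι : Type*} [Fintype ι] {x : ι → ℝ}
    (hx : ∑ i, x i ^ 2 ≤ 1) (w y : ι → ℝ) :
    |∑ i, (w i * x i) * y i| ≤ √(∑ i, w i ^ 2) * √(∑ i, y i ^ 2) := by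
  have hwx : ∑ i, (w i * x i) ^ 2 ≤ ∑ i, w i ^ 2 := by
    refine Finset.sum_le_sum fun i _ => ?_
    have hxi : x i ^ 2 ≤ 1 :=
      (Finset.single_le_sum (fun j _ => sq_nonneg (x j)) (Finset.mem_univ i)).trans hx
    rw [mul_pow]
    exact mul_le_of_le_one_right (sq_nonneg _) hxi
  rw [← Real.sqrt_mul (Finset.sum_nonneg fun i _ => sq_nonneg (w i))]
  refine Real.abs_le_sqrt ((Finset.sum_mul_sq_le_sq_mul_sq _ _ _).trans ?_)
  exact mul_le_mul_of_nonneg_right hwx (Finset.sum_nonneg fun i _ => sq_nonneg (y i))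

theorem perturbation_quadratic_bound_general (n d k : ℕ) (α : ℝ) (hα : 0 < α)
    (Y : Matrix (Fin n) (Fin d) ℝ) (hY : Yᵀ * Y = 1)
    (H : Matrix (Fin n) (Fin n) ℝ) (hH : Hᵀ = H)
    (hHF : Real.sqrt ((H * Hᵀ).trace) = Real.sqrt (k : ℝ))
    (hsd : ∑ i, ((∑ j, (Y i j) ^ 2) - (d : ℝ) / n) ^ 2 ≤ (d : ℝ) ^ 2 / n)
    (a : Fin d → ℝ) (ha : Real.sqrt (∑ j, (a j) ^ 2) = 1)
    (lam : ℝ) (hlam0 : 0 ≤ lam)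
    (heig : (Yᵀ * H * Y) *ᵥ a = lam • a) :
    |a ⬝ᵥ ((Yᵀ *
        (((1 / (2 * α)) • Matrix.diagonal fun i => ∑ j, (Y i j) ^ 2) *
            (lam • (1 : Matrix (Fin n) (Fin n) ℝ) - H) +
          (lam • (1 : Matrix (Fin n) (Fin n) ℝ) - H) *
            ((1 / (2 * α)) • Matrix.diagonal fun i => ∑ j, (Y i j) ^ 2)) * Y) *ᵥ a)|
      ≤ (1 / Real.sqrt n) * ((d : ℝ) / α) * (lam + Real.sqrt k) := by
  set x := Y *ᵥ a
  have ha₁ : a ⬝ᵥ a = 1 := by rw [dotProduct_self_eq_sum_sq, ← Real.sqrt_eq_one.mp ha]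
  have hx : x ⬝ᵥ x = 1 := by
    simpa only [Matrix.mul_one, hY, one_mulVec, ha₁] using
      (dotProduct_transpose_mul_mul_mulVec Y 1 a).symm
  have hxHx : x ⬝ᵥ (H *ᵥ x) = lam := by
    rw [← dotProduct_transpose_mul_mul_mulVec, heig, dotProduct_smul, ha₁, smul_eq_mul, mul_one]
  have hMx : (lam • (1 : Matrix (Fin n) (Fin n) ℝ) - H) *ᵥ x = lam • x - H *ᵥ x := by
    rw [sub_mulVec, smul_mulVec, one_mulVec]
  have hM : (lam • (1 : Matrix (Fin n) (Fin n) ℝ) - H).IsSymm :=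
    (isSymm_one.smul lam).sub hH
  have hm : √(∑ i, (lam • x - H *ᵥ x) i ^ 2) ≤ √k := by
    rw [← hHF, ← dotProduct_self_eq_sum_sq]
    exact Real.sqrt_le_sqrt (dotProduct_self_smul_sub_mulVec_le_trace H hx hxHx)
  have hD : √(∑ i, ((∑ j, Y i j ^ 2) - (d : ℝ) / n) ^ 2) ≤ d / √n := by
    refine (Real.sqrt_le_sqrt hsd).trans_eq ?_
    rw [Real.sqrt_div' _ (Nat.cast_nonneg n), Real.sqrt_sq (Nat.cast_nonneg d)]
  rw [dotProduct_transpose_mul_mul_mulVec,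
    ((isSymm_diagonal _).smul _).dotProduct_mul_add_mul_mulVec hM, smul_mulVec, dotProduct_smul,
    hMx, dotProduct_diagonal_mulVec_sub_const (dotProduct_smul_sub_eq_zero hx hxHx) _ ((d : ℝ) / n),
    smul_eq_mul]
  set S := ∑ i, ((∑ j, Y i j ^ 2) - (d : ℝ) / n) * x i * (lam • x - H *ᵥ x) i
  have hS : |S| ≤ d / √n * √k :=
    (abs_sum_mul_mul_le_of_sum_sq_le_one (dotProduct_self_eq_sum_sq x ▸ hx).le _ _).trans
      (mul_le_mul hD hm (Real.sqrt_nonneg _) (by positivity))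
  calc |2 * (1 / (2 * α) * S)| = |S| / α := by
        rw [abs_mul, abs_mul, abs_of_pos (by positivity : (0 : ℝ) < 1 / (2 * α))]
        field_simp
        norm_num
    _ ≤ d / √n * (lam + √k) / α := by
        gcongr
        exact hS.trans (by gcongr; linarith)
    _ = 1 / √n * (d / α) * (lam + √k) := by ring

theorem perturbation_quadratic_bound (n d k : ℕ) (hn : 0 < n) (α : ℝ) (hα : 0 < α)
    (Y : Matrix (Fin n) (Fin d) ℝ) (hY : Yᵀ * Y = 1)
    (H : Matrix (Fin n) (Fin n) ℝ) (hH : Hᵀ = H)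
    (hHF : Real.sqrt ((H * Hᵀ).trace) = Real.sqrt (k : ℝ))
    (hsd : ∑ i, ((∑ j, (Y i j) ^ 2) - (d : ℝ) / n) ^ 2 ≤ (d : ℝ) ^ 2 / n)
    (a : Fin d → ℝ) (ha : Real.sqrt (∑ j, (a j) ^ 2) = 1)
    (lam : ℝ) (hlam0 : 0 ≤ lam) (hlam1 : lam ≤ 1)
    (heig : (Yᵀ * H * Y) *ᵥ a = lam • a) :
    |a ⬝ᵥ ((Yᵀ *
        (((1 / (2 * α)) • Matrix.diagonal fun i => ∑ j, (Y i j) ^ 2) *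
            (lam • (1 : Matrix (Fin n) (Fin n) ℝ) - H) +
          (lam • (1 : Matrix (Fin n) (Fin n) ℝ) - H) *
            ((1 / (2 * α)) • Matrix.diagonal fun i => ∑ j, (Y i j) ^ 2)) * Y) *ᵥ a)|
      ≤ (1 / Real.sqrt n) * ((d : ℝ) / α) * (lam + Real.sqrt k) :=
  perturbation_quadratic_bound_general n d k α hα Y hY H hH hHF hsd a ha lam hlam0 heig
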